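/- The bilinear product on ℂ⁴ with basis e₁,e₂,e₃,e₄ defined by e₁∘e₁ = e₂, e₁∘e₂ = e₃, e₂∘e₁ = 2e₃, e₁∘e₃ = e₄, e₂∘e₂ = 3e₄, e₃∘e₁ = 3e₄ (all other basis products zero) satisfies the Zinbiel identity (u∘v)∘w = u∘(v∘w) + u∘(w∘v), and for w = a₁e₁+a₂e₂+a₃e₃+a₄e₄ the inner derivation ad_w(u) = w∘u - u∘w satisfies ad_w(e₁) = a₂e₃ + 2a₃e₄, ad_w(e₂) = -a₁e₃, ad_w(e₃) = -2a₁e₄, ad_w(e₄) = 0. -/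
import Mathlib


/-- The 4-dimensional Zinbiel algebra A₄¹: e₁∘e₁ = e₂, e₁∘e₂ = e₃, e₂∘e₁ = 2e₃,
e₁∘e₃ = e₄, e₂∘e₂ = 3e₄, e₃∘e₁ = 3e₄. -/
def mulA41 : (Fin 4 → ℂ) → (Fin 4 → ℂ) → (Fin 4 → ℂ) :=
  fun u v =>
    ![0, u 0 * v 0, u 0 * v 1 + 2 * (u 1 * v 0),
      u 0 * v 2 + 3 * (u 1 * v 1) + 3 * (u 2 * v 0)]

/-- The product of A₄¹ satisfies the Zinbiel identity, and the inner derivation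
ad_w (with ad_w(u) = w∘u - u∘w) takes the stated values on the basis. -/
theorem zinbiel_and_inner_derivations_A41 :
    (∀ u v w : Fin 4 → ℂ,
      mulA41 (mulA41 u v) w = mulA41 u (mulA41 v w) + mulA41 u (mulA41 w v)) ∧
    (∀ a₁ a₂ a₃ a₄ : ℂ,
      mulA41 ![a₁, a₂, a₃, a₄] ![1, 0, 0, 0] - mulA41 ![1, 0, 0, 0] ![a₁, a₂, a₃, a₄] =
        a₂ • ![0, 0, 1, 0] + (2 * a₃) • ![0, 0, 0, 1] ∧
      mulA41 ![a₁, a₂, a₃, a₄] ![0, 1, 0, 0] - mulA41 ![0, 1, 0, 0] ![a₁, a₂, a₃, a₄] =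
        (-a₁) • ![0, 0, 1, 0] ∧
      mulA41 ![a₁, a₂, a₃, a₄] ![0, 0, 1, 0] - mulA41 ![0, 0, 1, 0] ![a₁, a₂, a₃, a₄] =
        (-(2 * a₁)) • ![0, 0, 0, 1] ∧
      mulA41 ![a₁, a₂, a₃, a₄] ![0, 0, 0, 1] - mulA41 ![0, 0, 0, 1] ![a₁, a₂, a₃, a₄] = 0) := by
  constructor
  · intro u v w
    funext i
    fin_cases i <;> simp [mulA41] <;> ring
  · intro a₁ a₂ a₃ a₄
    refine ⟨?_, ?_, ?_, ?_⟩ <;> (funext i; fin_cases i <;> simp [mulA41] <;> ring)
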